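/- arXiv:1610.01893 — 9 statements merged into one kernel-verified Lean document; each statement's English description precedes it below -/
import Mathlib

section
/- For every integer k ≥ 1, the coefficient w_k = ((2k)!)^2 / (2^{4k} (k!)^4) satisfies 2/(π(2k+1)) < w_k < 1/(π k). -/
open Real

lemma prodP (k : ℕ) : ∏ i ∈ Finset.range k, ((2 * (i:ℝ) + 1) / (2 * i + 2)) =
    (Nat.factorial (2 * k) : ℝ) / (2 ^ (2 * k) * (Nat.factorial k : ℝ) ^ 2) := by
  induction k with
  | zero => simp
  | succ n ih =>
    rw [Finset.prod_range_succ, ih]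
    have e : Nat.factorial (2 * (n + 1)) = (2*n+2) * ((2*n+1) * Nat.factorial (2*n)) := by
      rw [show 2*(n+1) = (2*n+1)+1 by ring, Nat.factorial_succ,
        show 2*n+1 = (2*n)+1 by ring, Nat.factorial_succ]
    have ef : Nat.factorial (n + 1) = (n+1) * Nat.factorial n := Nat.factorial_succ n
    have ep : (2:ℝ) ^ (2 * (n + 1)) = 2 ^ (2 * n) * 4 := by
      rw [show 2*(n+1) = 2*n+2 by ring, pow_add]; norm_num
    rw [e, ef]
    have hf : (Nat.factorial (2*n) : ℝ) ≠ 0 := Nat.cast_ne_zero.2 (Nat.factorial_ne_zero _)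
    have hk : (Nat.factorial n : ℝ) ≠ 0 := Nat.cast_ne_zero.2 (Nat.factorial_ne_zero _)
    push_cast
    rw [ep]
    field_simp
    ring

lemma prodQ (k : ℕ) : ∏ i ∈ Finset.range k, ((2 * (i:ℝ) + 2) / (2 * i + 3)) =
    (2 ^ (2 * k) * (Nat.factorial k : ℝ) ^ 2) / (Nat.factorial (2 * k + 1) : ℝ) := by
  induction k with
  | zero => simp
  | succ n ih =>
    rw [Finset.prod_range_succ, ih]
    have e : Nat.factorial (2 * (n + 1) + 1) = (2*n+3) * ((2*n+2) * Nat.factorial (2*n+1)) := by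
      rw [show 2*(n+1)+1 = (2*n+2)+1 by ring, Nat.factorial_succ,
        show 2*n+2 = (2*n+1)+1 by ring, Nat.factorial_succ]
    have ef : Nat.factorial (n + 1) = (n+1) * Nat.factorial n := Nat.factorial_succ n
    have ep : (2:ℝ) ^ (2 * (n + 1)) = 2 ^ (2 * n) * 4 := by
      rw [show 2*(n+1) = 2*n+2 by ring, pow_add]; norm_num
    rw [e, ef]
    have hf : (Nat.factorial (2*n+1) : ℝ) ≠ 0 := Nat.cast_ne_zero.2 (Nat.factorial_ne_zero _)
    have hk : (Nat.factorial n : ℝ) ≠ 0 := Nat.cast_ne_zero.2 (Nat.factorial_ne_zero _)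
    push_cast
    rw [ep]
    field_simp
    ring

lemma sin_pow_int_lt (n : ℕ) :
    (∫ x in (0:ℝ)..π, Real.sin x ^ (n + 1)) < ∫ x in (0:ℝ)..π, Real.sin x ^ n := by
  apply intervalIntegral.integral_lt_integral_of_continuousOn_of_le_of_exists_lt pi_pos
    (by fun_prop) (by fun_prop)
  · intro x hx
    have h0 : 0 ≤ Real.sin x := Real.sin_nonneg_of_nonneg_of_le_pi hx.1.le hx.2
    have h1 : Real.sin x ≤ 1 := Real.sin_le_one x
    calc Real.sin x ^ (n+1) = Real.sin x ^ n * Real.sin x := by ring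
    _ ≤ Real.sin x ^ n * 1 := mul_le_mul_of_nonneg_left h1 (pow_nonneg h0 n)
    _ = Real.sin x ^ n := by ring
  · refine ⟨π/4, ⟨by positivity, by linarith [pi_pos]⟩, ?_⟩
    rw [Real.sin_pi_div_four]
    have h0 : (0:ℝ) < Real.sqrt 2 / 2 := by positivity
    have h1 : Real.sqrt 2 / 2 < 1 := by
      rw [div_lt_one (by norm_num)]
      calc Real.sqrt 2 < Real.sqrt 4 := by
            apply Real.sqrt_lt_sqrt <;> norm_num
      _ = 2 := by
            rw [show (4:ℝ) = 2^2 by norm_num, Real.sqrt_sq (by norm_num)]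
    calc (Real.sqrt 2 / 2) ^ (n+1) = (Real.sqrt 2 / 2) ^ n * (Real.sqrt 2 / 2) := by ring
    _ < (Real.sqrt 2 / 2) ^ n * 1 := by
        apply mul_lt_mul_of_pos_left h1 (pow_pos h0 n)
    _ = (Real.sqrt 2 / 2) ^ n := by ring

theorem wk_bounds (k : ℕ) (hk : 1 ≤ k) :
    2 / (π * (2 * k + 1)) <
      ((Nat.factorial (2 * k) : ℝ))^2 / (2 ^ (4 * k) * (Nat.factorial k : ℝ)^4) ∧
    ((Nat.factorial (2 * k) : ℝ))^2 / (2 ^ (4 * k) * (Nat.factorial k : ℝ)^4) <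
      1 / (π * k) := by
  obtain ⟨m, rfl⟩ := Nat.exists_eq_add_of_le hk
  set k := 1 + m with hkdef
  set P : ℝ := (Nat.factorial (2 * k) : ℝ) / (2 ^ (2 * k) * (Nat.factorial k : ℝ) ^ 2) with hP
  set Q : ℝ := (2 ^ (2 * k) * (Nat.factorial k : ℝ) ^ 2) / (Nat.factorial (2 * k + 1) : ℝ) with hQ
  set Qm : ℝ := (2 ^ (2 * m) * (Nat.factorial m : ℝ) ^ 2) / (Nat.factorial (2 * m + 1) : ℝ) with hQm
  have hfk : (0:ℝ) < Nat.factorial k := Nat.cast_pos.2 (Nat.factorial_pos _)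
  have hf2k : (0:ℝ) < Nat.factorial (2*k) := Nat.cast_pos.2 (Nat.factorial_pos _)
  have hPpos : 0 < P := by positivity
  have hkR : (0:ℝ) < (k:ℝ) := by positivity
  have hkpos : (0:ℝ) < 2 * (k:ℝ) + 1 := by positivity
  have hπ := pi_pos
  have hgoal : ((Nat.factorial (2 * k) : ℝ))^2 / (2 ^ (4 * k) * (Nat.factorial k : ℝ)^4) = P ^ 2 := by
    rw [hP, div_pow]
    congr 1
    rw [mul_pow, ← pow_mul]
    ring_nf
  have hI2k : (∫ x in (0:ℝ)..π, Real.sin x ^ (2 * k)) = π * P := by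
    rw [integral_sin_pow_even, prodP]
  have hI2k1 : (∫ x in (0:ℝ)..π, Real.sin x ^ (2 * k + 1)) = 2 * Q := by
    rw [integral_sin_pow_odd, prodQ]
  have hI2m1 : (∫ x in (0:ℝ)..π, Real.sin x ^ (2 * m + 1)) = 2 * Qm := by
    rw [integral_sin_pow_odd, prodQ]
  have hPQ : P * Q = 1 / (2 * (k:ℝ) + 1) := by
    rw [hP, hQ, Nat.factorial_succ]
    have hf1 : (Nat.factorial (2*k) : ℝ) ≠ 0 := hf2k.ne'
    push_cast
    field_simp
  have hPQm : P * Qm = 1 / (2 * (k:ℝ)) := by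
    rw [hP, hQm]
    have e : Nat.factorial (2 * k) = (2*m+2) * ((2*m+1) * Nat.factorial (2*m)) := by
      rw [show 2*k = (2*m+1)+1 by omega, Nat.factorial_succ,
        show 2*m+1 = (2*m)+1 by ring, Nat.factorial_succ]
    have ef : Nat.factorial k = (m+1) * Nat.factorial m := by
      rw [show k = m + 1 by omega, Nat.factorial_succ]
    have e2 : Nat.factorial (2*m+1) = (2*m+1) * Nat.factorial (2*m) := Nat.factorial_succ _
    have ep : (2:ℝ) ^ (2 * k) = 2 ^ (2 * m) * 4 := by
      rw [show 2*k = 2*m+2 by omega, pow_add]; norm_num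
    rw [e, ef, e2]
    have hf : (Nat.factorial (2*m) : ℝ) ≠ 0 := Nat.cast_ne_zero.2 (Nat.factorial_ne_zero _)
    have hm : (Nat.factorial m : ℝ) ≠ 0 := Nat.cast_ne_zero.2 (Nat.factorial_ne_zero _)
    have hkm : (k:ℝ) = (m:ℝ) + 1 := by rw [hkdef]; push_cast; ring
    push_cast
    rw [ep, hkm]
    field_simp
    ring
  constructor
  · -- lower bound
    have h := sin_pow_int_lt (2 * k)
    rw [hI2k, hI2k1] at h
    have h3 : 2 * (1 / (2 * (k:ℝ) + 1)) < π * P ^ 2 := by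
      have hm := mul_lt_mul_of_pos_left h hPpos
      calc 2 * (1 / (2 * (k:ℝ) + 1)) = P * (2 * Q) := by rw [← hPQ]; ring
      _ < P * (π * P) := hm
      _ = π * P ^ 2 := by ring
    rw [hgoal, div_lt_iff₀ (by positivity)]
    rw [mul_one_div, div_lt_iff₀ hkpos] at h3
    calc (2:ℝ) < π * P ^ 2 * (2 * (k:ℝ) + 1) := h3
    _ = P ^ 2 * (π * (2 * (k:ℝ) + 1)) := by ring
  · -- upper bound
    have h : (∫ x in (0:ℝ)..π, Real.sin x ^ (2 * m + 1 + 1)) <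
        ∫ x in (0:ℝ)..π, Real.sin x ^ (2 * m + 1) := sin_pow_int_lt (2 * m + 1)
    rw [show 2 * m + 1 + 1 = 2 * k by omega, hI2k, hI2m1] at h
    have h3 : π * P ^ 2 < 1 / (k:ℝ) := by
      have hm := mul_lt_mul_of_pos_left h hPpos
      calc π * P ^ 2 = P * (π * P) := by ring
      _ < P * (2 * Qm) := hm
      _ = 2 * (1 / (2 * (k:ℝ))) := by rw [show P * (2*Qm) = 2*(P*Qm) by ring, hPQm]
      _ = 1 / (k:ℝ) := by field_simp
    rw [hgoal, lt_div_iff₀ (by positivity)]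
    rw [lt_div_iff₀ hkR] at h3
    calc P ^ 2 * (π * (k:ℝ)) = π * P ^ 2 * (k:ℝ) := by ring
    _ < 1 := h3
end

section
/- For real x > 0, K_0(x) = ∫₀^∞ e^{-2x cosh v} dv satisfies K_0(x) < √(π/(4x)) · e^{-2x}. -/
/-!
Since `cosh v = 1 + 2 sinh² (v / 2) > 1 + v² / 2` for `v > 0`, the integrand is strictly
dominated on `(0, ∞)` by `e^{-2x} e^{-x v²}`, whose integral is the half Gaussian integral
`e^{-2x} √(π / x) / 2`.
-/

open Real MeasureTheory

theorem Real.one_add_sq_div_two_lt_cosh {v : ℝ} (hv : 0 < v) : 1 + v ^ 2 / 2 < cosh v := by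
  have hsinh : v / 2 < sinh (v / 2) := self_lt_sinh_iff.2 (by positivity)
  have hcosh : cosh v = 1 + 2 * sinh (v / 2) ^ 2 := by
    rw [← cosh_sq_sub_sinh_sq (v / 2)]
    conv_lhs => rw [show v = 2 * (v / 2) by ring, cosh_two_mul]
    ring
  nlinarith

theorem integral_lt_integral_of_ae_lt {α : Type*} [MeasurableSpace α] {μ : Measure α}
    {f g : α → ℝ} (hμ : μ ≠ 0) (hf : Integrable f μ) (hg : Integrable g μ)
    (hlt : ∀ᵐ x ∂μ, f x < g x) :
    ∫ x, f x ∂μ < ∫ x, g x ∂μ := by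
  rw [← sub_pos, ← integral_sub hg hf,
    integral_pos_iff_support_of_nonneg_ae (hlt.mono fun x hx => (sub_pos.2 hx).le) (hg.sub hf),
    pos_iff_ne_zero]
  intro hnull
  have hfalse : ∀ᵐ _ ∂μ, False := by
    filter_upwards [hlt, measure_eq_zero_iff_ae_notMem.1 hnull] with x hx hx'
    exact hx' (sub_ne_zero.2 hx.ne')
  exact hμ (ae_eq_bot.1 (Filter.eventually_false_iff_eq_bot.1 hfalse))

theorem exp_neg_two_mul_cosh_lt {x v : ℝ} (hx : 0 < x) (hv : 0 < v) :
    exp (-2 * x * cosh v) < exp (-2 * x) * exp (-x * v ^ 2) := by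
  rw [← exp_add, exp_lt_exp]
  nlinarith [one_add_sq_div_two_lt_cosh hv]

theorem K0_upper_bound (x : ℝ) (hx : 0 < x) :
    (∫ v in Set.Ioi (0:ℝ), Real.exp (-2 * x * Real.cosh v)) <
      Real.sqrt (π / (4 * x)) * Real.exp (-2 * x) := by
  have hbound : ∀ v ∈ Set.Ioi (0 : ℝ),
      exp (-2 * x * cosh v) < exp (-2 * x) * exp (-x * v ^ 2) :=
    fun v hv => exp_neg_two_mul_cosh_lt hx hv
  have hg : IntegrableOn (fun v => exp (-2 * x) * exp (-x * v ^ 2)) (Set.Ioi 0) :=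
    (integrableOn_Ioi_exp_neg_mul_sq_iff.2 hx).const_mul _
  have hf : IntegrableOn (fun v => exp (-2 * x * cosh v)) (Set.Ioi 0) :=
    hg.mono' (by fun_prop) <| ae_restrict_of_forall_mem measurableSet_Ioi fun v hv => by
      rw [norm_of_nonneg (exp_pos _).le]; exact (hbound v hv).le
  calc (∫ v in Set.Ioi 0, exp (-2 * x * cosh v))
      < ∫ v in Set.Ioi 0, exp (-2 * x) * exp (-x * v ^ 2) :=
        integral_lt_integral_of_ae_lt (by simp) hf hg
          (ae_restrict_of_forall_mem measurableSet_Ioi hbound)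
    _ = √(π / (4 * x)) * exp (-2 * x) := by
        rw [integral_const_mul, integral_gaussian_Ioi, mul_comm,
          show π / (4 * x) = π / x / 2 ^ 2 by ring,
          sqrt_div (by positivity : 0 ≤ π / x) (2 ^ 2), sqrt_sq zero_le_two]
end

section
/- For real x ≥ 1, I_0(x) = (1/π) ∫₀^π e^{2x cos u} du satisfies I_0(x) > e^{2x}/√(4πx). -/
/-!
Since `cos u ≥ 1 - u²/2 + u⁴/24 - u⁶/720` and `eᵗ ≥ 1 + t`, the integrand satisfies
`e^{2x cos u} ≥ e^{2x} e^{-xu²} (1 + x p(u))` with `p(u) = u⁴/12 - u⁶/360`, which is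
nonnegative on `[0, π]`. The Gaussian part integrates over `[0, π]` to at least `√(π/x)/2`
minus a tail of size `e^{-xπ²}/(2πx)`, and `e^{2x} √(π/x) / (2π)` is exactly `e^{2x}/√(4πx)`.
The correction, counted on `[0, 1]` only, contributes at least `x e^{-x} · 41/2520`, which
beats the tail for `x ≥ 1`.
-/

open Real MeasureTheory Filter Set Topology

lemma le_of_hasDerivAt_le_of_nonneg {f g f' g' : ℝ → ℝ}
    (hf : ∀ t, HasDerivAt f (f' t) t) (hg : ∀ t, HasDerivAt g (g' t) t) (h₀ : f 0 ≤ g 0)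
    (hle : ∀ t, 0 ≤ t → f' t ≤ g' t) {u : ℝ} (hu : 0 ≤ u) : f u ≤ g u := by
  have hmono : MonotoneOn (fun t ↦ g t - f t) (Ici 0) := by
    refine monotoneOn_of_hasDerivWithinAt_nonneg (f' := fun t ↦ g' t - f' t) (convex_Ici 0)
      (fun t _ ↦ ((hg t).sub (hf t)).continuousAt.continuousWithinAt)
      (fun t _ ↦ ((hg t).sub (hf t)).hasDerivWithinAt) fun t ht ↦ ?_
    rw [interior_Ici] at ht
    exact sub_nonneg.2 (hle t ht.le)
  have := hmono self_mem_Ici hu hu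
  simp only at this
  linarith

namespace Real

lemma cos_le_one_sub_sq_div_two_add_pow_four_div_24 {u : ℝ} (hu : 0 ≤ u) :
    cos u ≤ 1 - u ^ 2 / 2 + u ^ 4 / 24 := by
  refine le_of_hasDerivAt_le_of_nonneg (g := fun t ↦ 1 - t ^ 2 / 2 + t ^ 4 / 24)
    (f' := fun t ↦ -sin t) (g' := fun t ↦ -t + t ^ 3 / 6) hasDerivAt_cos (fun t ↦ ?_)
    (by simp) (fun t ht ↦ by linarith [sin_ge_sub_cube ht]) hu
  exact (((hasDerivAt_pow 2 t).div_const 2).const_sub 1).add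
    ((hasDerivAt_pow 4 t).div_const 24) |>.congr_deriv (by push_cast; ring)

lemma sin_le_sub_cube_div_six_add_pow_five_div_120 {u : ℝ} (hu : 0 ≤ u) :
    sin u ≤ u - u ^ 3 / 6 + u ^ 5 / 120 := by
  refine le_of_hasDerivAt_le_of_nonneg (g := fun t ↦ t - t ^ 3 / 6 + t ^ 5 / 120)
    (f' := cos) (g' := fun t ↦ 1 - t ^ 2 / 2 + t ^ 4 / 24) hasDerivAt_sin (fun t ↦ ?_)
    (by simp) (fun t ht ↦ cos_le_one_sub_sq_div_two_add_pow_four_div_24 ht) hu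
  exact ((hasDerivAt_id t).sub ((hasDerivAt_pow 3 t).div_const 6)).add
    ((hasDerivAt_pow 5 t).div_const 120) |>.congr_deriv (by push_cast; ring)

lemma one_sub_sq_div_two_add_pow_four_div_24_sub_pow_six_div_720_le_cos {u : ℝ} (hu : 0 ≤ u) :
    1 - u ^ 2 / 2 + u ^ 4 / 24 - u ^ 6 / 720 ≤ cos u := by
  refine le_of_hasDerivAt_le_of_nonneg (f := fun t ↦ 1 - t ^ 2 / 2 + t ^ 4 / 24 - t ^ 6 / 720)
    (f' := fun t ↦ -t + t ^ 3 / 6 - t ^ 5 / 120) (g' := fun t ↦ -sin t) (fun t ↦ ?_)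
    hasDerivAt_cos (by simp)
    (fun t ht ↦ by linarith [sin_le_sub_cube_div_six_add_pow_five_div_120 ht]) hu
  exact ((((hasDerivAt_pow 2 t).div_const 2).const_sub 1).add
    ((hasDerivAt_pow 4 t).div_const 24)).sub ((hasDerivAt_pow 6 t).div_const 720)
    |>.congr_deriv (by push_cast; ring)

end Real

lemma integral_Ioi_mul_exp_neg_mul_sq {b : ℝ} (hb : 0 < b) (a : ℝ) :
    ∫ u in Ioi a, u * exp (-b * u ^ 2) = exp (-b * a ^ 2) / (2 * b) := by
  have hderiv (t : ℝ) :
      HasDerivAt (fun t ↦ -exp (-b * t ^ 2) / (2 * b)) (t * exp (-b * t ^ 2)) t := by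
    refine (((hasDerivAt_pow 2 t).const_mul (-b)).exp.neg.div_const (2 * b)).congr_deriv ?_
    field_simp
    ring
  have hlim : Tendsto (fun t ↦ -exp (-b * t ^ 2) / (2 * b)) atTop (𝓝 (-0 / (2 * b))) :=
    (tendsto_exp_atBot.comp ((tendsto_pow_atTop two_ne_zero).const_mul_atTop_of_neg
      (neg_lt_zero.2 hb))).neg.div_const _
  rw [integral_Ioi_of_hasDerivAt_of_tendsto' (fun t _ ↦ hderiv t)
    (integrable_mul_exp_neg_mul_sq hb).integrableOn hlim]
  ring

lemma integral_Ioi_exp_neg_mul_sq_le {a b : ℝ} (ha : 0 < a) (hb : 0 < b) :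
    ∫ u in Ioi a, exp (-b * u ^ 2) ≤ exp (-b * a ^ 2) / (2 * a * b) := by
  calc ∫ u in Ioi a, exp (-b * u ^ 2)
      ≤ ∫ u in Ioi a, u * exp (-b * u ^ 2) / a := by
        refine setIntegral_mono_on (integrable_exp_neg_mul_sq hb).integrableOn
          ((integrable_mul_exp_neg_mul_sq hb).integrableOn.div_const a) measurableSet_Ioi
          fun u hu ↦ ?_
        rw [le_div_iff₀ ha, mul_comm]
        exact mul_le_mul_of_nonneg_right hu.le (exp_pos _).le
    _ = exp (-b * a ^ 2) / (2 * a * b) := by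
        rw [integral_div, integral_Ioi_mul_exp_neg_mul_sq hb]
        field_simp

lemma sqrt_pi_div_two_sub_le_integral_exp_neg_mul_sq {a b : ℝ} (ha : 0 < a) (hb : 0 < b) :
    √(π / b) / 2 - exp (-b * a ^ 2) / (2 * a * b) ≤ ∫ u in 0..a, exp (-b * u ^ 2) := by
  rw [← intervalIntegral.integral_Ioi_sub_Ioi (integrable_exp_neg_mul_sq hb).integrableOn ha.le,
    integral_gaussian_Ioi]
  linarith [integral_Ioi_exp_neg_mul_sq_le ha hb]

lemma mul_exp_neg_le_integral_sextic_mul_exp_neg_mul_sq {a b : ℝ} (ha : 1 ≤ a)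
    (ha30 : a ^ 2 ≤ 30) (hb : 0 ≤ b) :
    41 / 2520 * exp (-b) ≤ ∫ u in 0..a, (u ^ 4 / 12 - u ^ 6 / 360) * exp (-b * u ^ 2) := by
  have hcont : Continuous fun u : ℝ ↦ (u ^ 4 / 12 - u ^ 6 / 360) * exp (-b * u ^ 2) := by
    fun_prop
  have hp_nonneg {u : ℝ} (hu : u ^ 2 ≤ 30) : 0 ≤ u ^ 4 / 12 - u ^ 6 / 360 := by
    nlinarith [mul_nonneg (pow_nonneg (sq_nonneg u) 2) (sub_nonneg.2 hu)]
  calc 41 / 2520 * exp (-b)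
      = ∫ u in (0 : ℝ)..1, (u ^ 4 / 12 - u ^ 6 / 360) * exp (-b) := by
        rw [intervalIntegral.integral_mul_const, intervalIntegral.integral_sub
          ((intervalIntegral.intervalIntegrable_pow 4).div_const _)
          ((intervalIntegral.intervalIntegrable_pow 6).div_const _),
          intervalIntegral.integral_div, intervalIntegral.integral_div, integral_pow, integral_pow]
        norm_num
    _ ≤ ∫ u in (0 : ℝ)..1, (u ^ 4 / 12 - u ^ 6 / 360) * exp (-b * u ^ 2) := by
        refine intervalIntegral.integral_mono_on zero_le_one
          ((by fun_prop : Continuous _).intervalIntegrable _ _)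
          (hcont.intervalIntegrable _ _) fun u ⟨hu0, hu1⟩ ↦ ?_
        have hu2 : u ^ 2 ≤ 1 := by nlinarith
        gcongr
        · exact hp_nonneg (by linarith)
        · nlinarith
    _ ≤ ∫ u in (0 : ℝ)..a, (u ^ 4 / 12 - u ^ 6 / 360) * exp (-b * u ^ 2) :=
        intervalIntegral.integral_mono_interval le_rfl zero_le_one ha
          ((ae_restrict_mem measurableSet_Ioc).mono fun u ⟨_, hua⟩ ↦
            mul_nonneg (hp_nonneg (by nlinarith)) (exp_pos _).le)
          (hcont.intervalIntegrable _ _)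

lemma exp_neg_mul_pi_sq_div_lt {x : ℝ} (hx : 1 ≤ x) :
    exp (-x * π ^ 2) / (2 * π * x) < x * (41 / 2520 * exp (-x)) := by
  have hπ := pi_gt_three
  have hexp8 : 41 ≤ exp 8 := by
    have := quadratic_le_exp_of_nonneg (x := 8) (by norm_num)
    norm_num at this
    linarith
  have hdecay : exp (-x * π ^ 2) ≤ exp (-x) / 41 := by
    rw [le_div_iff₀ (by norm_num)]
    calc exp (-x * π ^ 2) * 41 ≤ exp (-x * π ^ 2) * exp 8 := by gcongr
      _ = exp (-x * π ^ 2 + 8) := (exp_add _ _).symm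
      _ ≤ exp (-x) := exp_le_exp.2 <| by
          nlinarith [mul_le_mul_of_nonneg_right hx (by nlinarith : (0 : ℝ) ≤ π ^ 2 - 9)]
  rw [div_lt_iff₀ (by positivity)]
  calc exp (-x * π ^ 2) ≤ exp (-x) / 41 := hdecay
    _ < 41 / 2520 * exp (-x) * (2 * 3 * 1 * 1) := by linarith [exp_pos (-x)]
    _ ≤ 41 / 2520 * exp (-x) * (2 * π * x * x) := by gcongr
    _ = x * (41 / 2520 * exp (-x)) * (2 * π * x) := by ring

lemma one_div_sqrt_four_mul_pi_mul {x : ℝ} (hx : 0 < x) :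
    1 / √(4 * π * x) = 1 / π * (√(π / x) / 2) := by
  rw [sqrt_div' _ hx.le, show 4 * π * x = 2 ^ 2 * π * x by norm_num, sqrt_mul (by positivity),
    sqrt_mul (by positivity), sqrt_sq zero_le_two]
  have := sq_sqrt pi_pos.le
  have := sqrt_pos.2 pi_pos
  have := sqrt_pos.2 hx
  field_simp
  linarith

lemma exp_two_mul_mul_exp_neg_mul_sq_mul_le_exp_two_mul_cos {x u : ℝ} (hx : 0 ≤ x)
    (hu : 0 ≤ u) :
    exp (2 * x) * (exp (-x * u ^ 2) + x * ((u ^ 4 / 12 - u ^ 6 / 360) * exp (-x * u ^ 2))) ≤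
      exp (2 * x * cos u) := by
  have hcos := mul_le_mul_of_nonneg_left
    (one_sub_sq_div_two_add_pow_four_div_24_sub_pow_six_div_720_le_cos hu)
    (by positivity : 0 ≤ 2 * x)
  calc exp (2 * x) * (exp (-x * u ^ 2) + x * ((u ^ 4 / 12 - u ^ 6 / 360) * exp (-x * u ^ 2)))
      = exp (2 * x - x * u ^ 2) * (x * (u ^ 4 / 12 - u ^ 6 / 360) + 1) := by
        rw [show 2 * x - x * u ^ 2 = 2 * x + -x * u ^ 2 by ring, exp_add]
        ring
    _ ≤ exp (2 * x - x * u ^ 2) * exp (x * (u ^ 4 / 12 - u ^ 6 / 360)) := by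
        gcongr
        exact add_one_le_exp _
    _ = exp (2 * x * (1 - u ^ 2 / 2 + u ^ 4 / 24 - u ^ 6 / 720)) := by
        rw [← exp_add]
        ring_nf
    _ ≤ exp (2 * x * cos u) := exp_le_exp.2 hcos

theorem I0_lower_bound (x : ℝ) (hx : 1 ≤ x) :
    Real.exp (2 * x) / Real.sqrt (4 * π * x) <
      (1 / π) * ∫ u in (0:ℝ)..π, Real.exp (2 * x * Real.cos u) := by
  have hx0 : 0 < x := one_pos.trans_le hx
  have hgauss := sqrt_pi_div_two_sub_le_integral_exp_neg_mul_sq pi_pos hx0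
  have hcorrection := mul_le_mul_of_nonneg_left
    (mul_exp_neg_le_integral_sextic_mul_exp_neg_mul_sq (a := π) (by linarith [pi_gt_three])
      (by nlinarith [pi_lt_four, pi_pos]) hx0.le) hx0.le
  have htail := exp_neg_mul_pi_sq_div_lt hx
  have hlower : exp (2 * x) * (√(π / x) / 2) <
      ∫ u in (0:ℝ)..π, exp (2 * x) * (exp (-x * u ^ 2) +
        x * ((u ^ 4 / 12 - u ^ 6 / 360) * exp (-x * u ^ 2))) := by
    rw [intervalIntegral.integral_const_mul, intervalIntegral.integral_add
      ((by fun_prop : Continuous _).intervalIntegrable _ _)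
      ((by fun_prop : Continuous _).intervalIntegrable _ _), intervalIntegral.integral_const_mul]
    gcongr
    linarith
  calc exp (2 * x) / √(4 * π * x) = 1 / π * (exp (2 * x) * (√(π / x) / 2)) := by
        rw [div_eq_mul_one_div, one_div_sqrt_four_mul_pi_mul hx0]
        ring
    _ < 1 / π * ∫ u in (0:ℝ)..π, exp (2 * x * cos u) := by
        gcongr
        refine hlower.trans_le <| intervalIntegral.integral_mono_on pi_pos.le
          ((by fun_prop : Continuous _).intervalIntegrable _ _)
          ((by fun_prop : Continuous _).intervalIntegrable _ _) fun u hu ↦ ?_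
        exact exp_two_mul_mul_exp_neg_mul_sq_mul_le_exp_two_mul_cos hx0.le hu.1
end

section
/- For real x ≥ 1, the ratio K_0(x)/I_0(x) satisfies 0 < K_0(x)/I_0(x) < π e^{-4x}, where I_0(x) = (1/π)∫₀^π e^{2x cos u} du and K_0(x) = ∫₀^∞ e^{-2x cosh v} dv. -/
/-!
Since `cosh v ≥ 1 + v²/2`, the integrand of `K₀` is dominated by `e^{-2x} e^{-x v²}`, so
`K₀(x) ≤ e^{-2x} √(π/x)/2`. Since `cos u ≥ 1 - u²/2`, the integral `π I₀(x)` dominates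
`e^{2x} ∫₀^π e^{-x u²}`, which falls short of `e^{2x} √(π/x)/2` only by `e^{2x}` times the
Gaussian tail beyond `π`, of size `O(e^{-4x})`. On `[5/2, 3]`, where `cos u ≥ -1` but
`1 - u²/2 < -2`, the minorant loses at least `e^{-2x}/4`, which beats that tail. Hence
`π I₀(x) > e^{2x} √(π/x)/2`, and dividing the two bounds gives the claim.
-/

open Real MeasureTheory Set

lemma one_add_sq_div_two_le_cosh (v : ℝ) : 1 + v ^ 2 / 2 ≤ cosh v := by
  rw [← cosh_abs, ← sq_abs]
  have hsinh : |v| / 2 ≤ sinh (|v| / 2) := self_le_sinh_iff.2 (by positivity)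
  have hcosh : cosh |v| = 1 + 2 * sinh (|v| / 2) ^ 2 := by
    have := cosh_two_mul (|v| / 2)
    rw [mul_div_cancel₀ _ two_ne_zero, cosh_sq] at this
    linarith
  nlinarith [pow_le_pow_left₀ (by positivity) hsinh 2]

lemma exp_neg_pi_lt_quarter : exp (-π) < 1 / 4 := by
  rw [exp_neg, inv_lt_comm₀ (exp_pos π) (by norm_num)]
  linarith [add_one_lt_exp pi_ne_zero, pi_gt_three]

section

variable {x : ℝ}

lemma exp_neg_two_mul_cosh_le (hx : 0 ≤ x) (v : ℝ) :
    exp (-2 * x * cosh v) ≤ exp (-2 * x) * exp (-x * v ^ 2) := by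
  rw [← exp_add, exp_le_exp]
  nlinarith [one_add_sq_div_two_le_cosh v]

lemma integrable_exp_neg_two_mul_cosh (hx : 0 < x) :
    Integrable fun v ↦ exp (-2 * x * cosh v) :=
  ((integrable_exp_neg_mul_sq hx).const_mul _).mono' (by fun_prop) <|
    .of_forall fun v ↦ by
      rw [norm_of_nonneg (exp_pos _).le]; exact exp_neg_two_mul_cosh_le hx.le v

lemma setIntegral_exp_neg_two_mul_cosh_pos (hx : 0 < x) :
    0 < ∫ v in Ioi 0, exp (-2 * x * cosh v) :=
  have : NeZero (volume.restrict (Ioi (0 : ℝ))) := ⟨by simp⟩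
  integral_exp_pos (integrable_exp_neg_two_mul_cosh hx).integrableOn

lemma setIntegral_exp_neg_two_mul_cosh_le (hx : 0 < x) :
    ∫ v in Ioi 0, exp (-2 * x * cosh v) ≤ exp (-2 * x) * (√(π / x) / 2) := by
  rw [← integral_gaussian_Ioi, ← integral_const_mul]
  exact setIntegral_mono (integrable_exp_neg_two_mul_cosh hx).integrableOn
    ((integrable_exp_neg_mul_sq hx).integrableOn.const_mul _) (exp_neg_two_mul_cosh_le hx.le)

lemma exp_mul_exp_neg_mul_sq_le_exp_mul_cos (hx : 0 ≤ x) (u : ℝ) :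
    exp (2 * x) * exp (-x * u ^ 2) ≤ exp (2 * x * cos u) := by
  rw [← exp_add, exp_le_exp]
  nlinarith [one_sub_sq_div_two_le_cos (x := u)]

lemma setIntegral_Ioi_pi_exp_neg_mul_sq_le (hx : 1 ≤ x) :
    ∫ u in Ioi π, exp (-x * u ^ 2) ≤ exp (-6 * x) * exp (-π) := by
  rw [← integral_exp_neg_Ioi, ← integral_const_mul]
  refine setIntegral_mono_on (integrable_exp_neg_mul_sq (by linarith)).integrableOn
    ((integrableOn_exp_neg_Ioi π).const_mul _) measurableSet_Ioi fun u hu ↦ ?_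
  have hu : 3 < u := pi_gt_three.trans hu
  rw [← exp_add, exp_le_exp]
  nlinarith [mul_nonneg (sub_nonneg.2 hx) (show 0 ≤ u ^ 2 - 6 by nlinarith)]

lemma exp_neg_two_mul_div_two_le_exp_mul_cos_sub (hx : 1 ≤ x) {u : ℝ} (hu : 5 / 2 ≤ u) :
    exp (-2 * x) / 2 ≤ exp (2 * x * cos u) - exp (2 * x) * exp (-x * u ^ 2) := by
  have hcos : exp (-2 * x) ≤ exp (2 * x * cos u) := by
    rw [exp_le_exp]; nlinarith [neg_one_le_cos u]
  have hgauss : exp (2 * x) * exp (-x * u ^ 2) ≤ exp (-2 * x) * exp (-1) := by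
    rw [← exp_add, ← exp_add, exp_le_exp]
    have hu2 : 25 / 4 ≤ u ^ 2 := by nlinarith
    nlinarith [mul_le_mul_of_nonneg_left hu2 (by linarith : 0 ≤ x)]
  nlinarith [exp_neg_one_lt_half, exp_pos (-2 * x)]

lemma exp_neg_two_mul_div_four_le_integral_exp_mul_cos_sub (hx : 1 ≤ x) :
    exp (-2 * x) / 4 ≤
      ∫ u in 0..π, (exp (2 * x * cos u) - exp (2 * x) * exp (-x * u ^ 2)) := by
  have hcont : Continuous fun u ↦ exp (2 * x * cos u) - exp (2 * x) * exp (-x * u ^ 2) := by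
    fun_prop
  calc exp (-2 * x) / 4 = ∫ _ in (5 / 2 : ℝ)..3, exp (-2 * x) / 2 := by simp; ring
    _ ≤ ∫ u in (5 / 2 : ℝ)..3, (exp (2 * x * cos u) - exp (2 * x) * exp (-x * u ^ 2)) :=
      intervalIntegral.integral_mono_on (by norm_num) intervalIntegrable_const
        (hcont.intervalIntegrable _ _)
        fun u hu ↦ exp_neg_two_mul_div_two_le_exp_mul_cos_sub hx hu.1
    _ ≤ ∫ u in 0..π, (exp (2 * x * cos u) - exp (2 * x) * exp (-x * u ^ 2)) :=
      intervalIntegral.integral_mono_interval (by norm_num) (by norm_num) pi_gt_three.le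
        (.of_forall fun u ↦
          sub_nonneg.2 (exp_mul_exp_neg_mul_sq_le_exp_mul_cos (by linarith) u))
        (hcont.intervalIntegrable _ _)

lemma exp_mul_sqrt_pi_div_lt_integral_exp_mul_cos (hx : 1 ≤ x) :
    exp (2 * x) * (√(π / x) / 2) < ∫ u in 0..π, exp (2 * x * cos u) := by
  have hgauss := integrable_exp_neg_mul_sq (show 0 < x by linarith)
  have hsplit :
      (∫ u in 0..π, exp (-x * u ^ 2)) + ∫ u in Ioi π, exp (-x * u ^ 2) = √(π / x) / 2 := by
    rw [intervalIntegral.integral_of_le pi_pos.le, ← setIntegral_union (Ioc_disjoint_Ioi le_rfl)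
      measurableSet_Ioi hgauss.integrableOn hgauss.integrableOn, Ioc_union_Ioi_eq_Ioi pi_pos.le,
      integral_gaussian_Ioi]
  have hdecomp : ∫ u in 0..π, exp (2 * x * cos u) =
      exp (2 * x) * (∫ u in 0..π, exp (-x * u ^ 2)) +
        ∫ u in 0..π, (exp (2 * x * cos u) - exp (2 * x) * exp (-x * u ^ 2)) := by
    rw [← intervalIntegral.integral_const_mul, ← intervalIntegral.integral_add
      ((by fun_prop : Continuous _).intervalIntegrable _ _)
      ((by fun_prop : Continuous _).intervalIntegrable _ _)]
    simp
  have htail : exp (2 * x) * ∫ u in Ioi π, exp (-x * u ^ 2) < exp (-2 * x) / 4 :=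
    calc exp (2 * x) * ∫ u in Ioi π, exp (-x * u ^ 2)
        ≤ exp (2 * x) * (exp (-6 * x) * exp (-π)) := by
          gcongr; exact setIntegral_Ioi_pi_exp_neg_mul_sq_le hx
      _ = exp (-4 * x) * exp (-π) := by rw [← mul_assoc, ← exp_add]; ring_nf
      _ ≤ exp (-2 * x) * exp (-π) := by gcongr; linarith
      _ < exp (-2 * x) / 4 := by nlinarith [exp_neg_pi_lt_quarter, exp_pos (-2 * x)]
  rw [hdecomp, ← hsplit, mul_add]
  linarith [exp_neg_two_mul_div_four_le_integral_exp_mul_cos_sub hx]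

end

theorem K0_div_I0_bounds (x : ℝ) (hx : 1 ≤ x) :
    0 < (∫ v in Set.Ioi (0:ℝ), Real.exp (-2 * x * Real.cosh v)) /
        ((1 / π) * ∫ u in (0:ℝ)..π, Real.exp (2 * x * Real.cos u)) ∧
    (∫ v in Set.Ioi (0:ℝ), Real.exp (-2 * x * Real.cosh v)) /
        ((1 / π) * ∫ u in (0:ℝ)..π, Real.exp (2 * x * Real.cos u)) <
      π * Real.exp (-4 * x) := by
  have hx0 : 0 < x := by linarith
  have hI := exp_mul_sqrt_pi_div_lt_integral_exp_mul_cos hx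
  have hIpos : 0 < ∫ u in (0:ℝ)..π, exp (2 * x * cos u) := lt_of_le_of_lt (by positivity) hI
  rw [one_div, ← div_eq_inv_mul, div_div_eq_mul_div]
  refine ⟨by have := setIntegral_exp_neg_two_mul_cosh_pos hx0; positivity, ?_⟩
  rw [div_lt_iff₀ hIpos, mul_comm, mul_assoc]
  gcongr
  calc ∫ v in Ioi 0, exp (-2 * x * cosh v) ≤ exp (-2 * x) * (√(π / x) / 2) :=
        setIntegral_exp_neg_two_mul_cosh_le hx0
    _ = exp (-4 * x) * (exp (2 * x) * (√(π / x) / 2)) := by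
        rw [← mul_assoc, ← exp_add]; ring_nf
    _ < exp (-4 * x) * ∫ u in (0:ℝ)..π, exp (2 * x * cos u) := by gcongr
end

section
/- For x > 0, I_0(x) K_0(x) = ∫₀^∞ e^{-4xr} φ(r) dr, where φ(r) = (1/(2π)) ∫₀^{2π} dθ/|1 - r e^{iθ}|. -/
/-!
Writing the left side as `(1/π) ∫∫ exp (-4x ρ) du dv` over `(0, π) × (0, ∞)` with
`ρ = (cosh v - cos u) / 2`, the substitution `v ↦ ρ` turns `dv` into
`2 dρ / √((2ρ + cos u)² - 1)` on `ρ > (1 - cos u) / 2`. After exchanging the integrals it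
remains to see, for fixed `ρ = r > 0`, that `∫ 2 du / √((2r + cos u)² - 1)` over
`{u ∈ (0, π) | cos u > 1 - 2r}` equals `∫₀^π dθ / |1 - r e^{iθ}|`: put
`cos u = |1 - r e^{iθ}| - r`. All of this is done with lower Lebesgue integrals, where Tonelli and
the changes of variables hold unconditionally, and the Bochner integrals are recovered at the end.
-/

open MeasureTheory Real Set
open scoped ENNReal

theorem norm_one_sub_ofReal_mul_exp_mul_I (r θ : ℝ) :
    ‖1 - (r : ℂ) * Complex.exp (θ * Complex.I)‖ = √(1 - 2 * r * cos θ + r ^ 2) := by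
  have h : 1 - (r : ℂ) * Complex.exp (θ * Complex.I)
      = (1 - r * cos θ : ℝ) + (-(r * sin θ) : ℝ) * Complex.I := by
    rw [Complex.exp_mul_I, ← Complex.ofReal_cos, ← Complex.ofReal_sin]
    push_cast
    ring
  rw [h, Complex.norm_def, Complex.normSq_add_mul_I]
  congr 1
  linear_combination r ^ 2 * sin_sq_add_cos_sq θ

theorem lintegral_Ioi_comp_cosh (g : ℝ → ℝ≥0∞) :
    ∫⁻ v in Ioi 0, g (cosh v) =
      ∫⁻ y in Ioi 1, ENNReal.ofReal (√(y ^ 2 - 1))⁻¹ * g y := by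
  have himage : arcosh '' Ioi 1 = Ioi 0 := by
    refine Subset.antisymm (image_subset_iff.2 fun y hy => arcosh_pos hy) fun v hv => ?_
    exact ⟨cosh v, one_lt_cosh.2 (ne_of_gt hv), arcosh_cosh (le_of_lt hv)⟩
  rw [← himage, lintegral_image_eq_lintegral_abs_deriv_mul measurableSet_Ioi
    (fun y hy => (hasDerivAt_arcosh hy).hasDerivWithinAt)
    (arcosh_injOn.mono Ioi_subset_Ici_self)]
  refine setLIntegral_congr_fun measurableSet_Ioi fun y hy => ?_
  rw [abs_of_nonneg (by positivity), cosh_arcosh (le_of_lt hy)]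

/-- Density of the image of Lebesgue measure on `(0, ∞)` under `v ↦ (cosh v - c) / 2`. -/
noncomputable def coshDensity (c ρ : ℝ) : ℝ≥0∞ :=
  (Ioi ((1 - c) / 2)).indicator (fun ρ => ENNReal.ofReal (2 / √((2 * ρ + c) ^ 2 - 1))) ρ

@[fun_prop]
theorem measurable_coshDensity : Measurable fun p : ℝ × ℝ => coshDensity p.1 p.2 := by
  have h : (fun p : ℝ × ℝ => coshDensity p.1 p.2) =
      {p : ℝ × ℝ | (1 - p.1) / 2 < p.2}.indicator
        fun p => ENNReal.ofReal (2 / √((2 * p.2 + p.1) ^ 2 - 1)) := by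
    ext ⟨c, ρ⟩
    simp only [coshDensity, indicator_apply, mem_Ioi, mem_ofPred_eq]
  rw [h]
  exact (by fun_prop : Measurable _).indicator
    (measurableSet_lt (by fun_prop) (by fun_prop))

theorem lintegral_Ioi_comp_cosh_sub_div_two {c : ℝ} (hc : c ≤ 1) (g : ℝ → ℝ≥0∞) :
    ∫⁻ v in Ioi 0, g ((cosh v - c) / 2) = ∫⁻ ρ in Ioi 0, coshDensity c ρ * g ρ := by
  have himage : (fun ρ => 2 * ρ + c) '' Ioi ((1 - c) / 2) = Ioi 1 := by
    ext y
    refine ⟨?_, fun hy => ⟨(y - c) / 2, ?_, by ring⟩⟩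
    · rintro ⟨ρ, hρ, rfl⟩
      simp only [mem_Ioi] at hρ ⊢
      linarith
    · simp only [mem_Ioi] at hy ⊢
      linarith
  have hsubset : Ioi ((1 - c) / 2) ⊆ Ioi 0 := Ioi_subset_Ioi (by linarith)
  rw [lintegral_Ioi_comp_cosh (fun y => g ((y - c) / 2)), ← himage,
    lintegral_image_eq_lintegral_abs_deriv_mul (f := fun ρ => 2 * ρ + c) (f' := fun _ => 2)
      measurableSet_Ioi
      (fun ρ _ => (((hasDerivAt_id ρ).const_mul 2).add_const c).hasDerivWithinAt.congr_deriv
        (mul_one 2))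
      (fun a _ b _ h => by simpa using h)]
  simp_rw [coshDensity, ← indicator_mul_left]
  rw [lintegral_indicator measurableSet_Ioi, Measure.restrict_restrict measurableSet_Ioi,
    inter_eq_left.2 hsubset]
  refine setLIntegral_congr_fun measurableSet_Ioi fun ρ hρ => ?_
  simp only [abs_two]
  rw [← mul_assoc, ← ENNReal.ofReal_mul zero_le_two, div_eq_mul_inv]
  congr 2
  ring

theorem cos_mem_Ioo_of_mem_Ioo {θ : ℝ} (hθ : θ ∈ Ioo 0 π) : cos θ ∈ Ioo (-1) 1 := by
  constructor
  · simpa using cos_lt_cos_of_nonneg_of_le_pi hθ.1.le le_rfl hθ.2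
  · simpa using cos_lt_cos_of_nonneg_of_le_pi le_rfl hθ.2.le hθ.1

theorem one_sub_two_mul_cos_add_sq_nonneg (r θ : ℝ) : 0 ≤ 1 - 2 * r * cos θ + r ^ 2 := by
  nlinarith [sq_nonneg (r - cos θ), sin_sq_add_cos_sq θ, sq_nonneg (sin θ)]

section DualAngle

variable {r θ : ℝ}

theorem sqrt_one_sub_two_mul_cos_add_sq_mem_Ioo (hr : 0 < r) (hθ : θ ∈ Ioo 0 π) :
    √(1 - 2 * r * cos θ + r ^ 2) ∈ Ioo |1 - r| (1 + r) := by
  obtain ⟨hcos₁, hcos₂⟩ := cos_mem_Ioo_of_mem_Ioo hθ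
  constructor
  · rw [lt_sqrt (abs_nonneg _), sq_abs]
    nlinarith
  · rw [sqrt_lt' (by linarith)]
    nlinarith

/-- The substitution `u = dualAngle r θ`, i.e. `cos u = |1 - r e^{iθ}| - r`, carries
`dθ / |1 - r e^{iθ}|` to `coshDensity (cos u) r du`. -/
noncomputable def dualAngle (r θ : ℝ) : ℝ := arccos (√(1 - 2 * r * cos θ + r ^ 2) - r)

theorem sqrt_one_sub_two_mul_cos_add_sq_sub_mem_Ioo (hr : 0 < r) (hθ : θ ∈ Ioo 0 π) :
    √(1 - 2 * r * cos θ + r ^ 2) - r ∈ Ioo (1 - 2 * r) 1 ∩ Ioo (-1) 1 := by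
  obtain ⟨h₁, h₂⟩ := sqrt_one_sub_two_mul_cos_add_sq_mem_Ioo hr hθ
  have := le_abs_self (1 - r)
  have := neg_abs_le (1 - r)
  exact ⟨⟨by linarith, by linarith⟩, by linarith, by linarith⟩

theorem cos_dualAngle (hr : 0 < r) (hθ : θ ∈ Ioo 0 π) :
    cos (dualAngle r θ) = √(1 - 2 * r * cos θ + r ^ 2) - r :=
  have h := (sqrt_one_sub_two_mul_cos_add_sq_sub_mem_Ioo hr hθ).2
  cos_arccos h.1.le h.2.le

theorem image_dualAngle (hr : 0 < r) :
    dualAngle r '' Ioo 0 π = {u | (1 - cos u) / 2 < r} ∩ Ioo 0 π := by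
  ext u
  constructor
  · rintro ⟨θ, hθ, rfl⟩
    obtain ⟨⟨h₁, -⟩, h₂, h₃⟩ := sqrt_one_sub_two_mul_cos_add_sq_sub_mem_Ioo hr hθ
    refine ⟨?_, arccos_pos.2 h₃, arccos_lt_pi.2 h₂⟩
    rw [mem_ofPred_eq, cos_dualAngle hr hθ]
    linarith
  · rintro ⟨hu, hu'⟩
    obtain ⟨hcos₁, hcos₂⟩ := cos_mem_Ioo_of_mem_Ioo hu'
    rw [mem_ofPred_eq] at hu
    set e := (1 + r ^ 2 - (r + cos u) ^ 2) / (2 * r)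
    have he₁ : -1 < e := by
      rw [lt_div_iff₀ (by positivity)]
      nlinarith
    have he₂ : e < 1 := by
      rw [div_lt_iff₀ (by positivity)]
      nlinarith
    refine ⟨arccos e, ⟨arccos_pos.2 he₂, arccos_lt_pi.2 he₁⟩, ?_⟩
    have hq : 1 - 2 * r * cos (arccos e) + r ^ 2 = (r + cos u) ^ 2 := by
      rw [cos_arccos he₁.le he₂.le]
      simp only [e]
      field_simp
      ring
    rw [dualAngle, hq, sqrt_sq (by linarith), add_sub_cancel_left,
      arccos_cos hu'.1.le hu'.2.le]

theorem injOn_dualAngle (hr : 0 < r) : InjOn (dualAngle r) (Ioo 0 π) := by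
  intro θ₁ h₁ θ₂ h₂ h
  have hcos := congrArg cos h
  rw [cos_dualAngle hr h₁, cos_dualAngle hr h₂, sub_left_inj,
    sqrt_inj (one_sub_two_mul_cos_add_sq_nonneg r θ₁)
      (one_sub_two_mul_cos_add_sq_nonneg r θ₂)] at hcos
  refine injOn_cos ⟨h₁.1.le, h₁.2.le⟩ ⟨h₂.1.le, h₂.2.le⟩ ?_
  nlinarith

theorem hasDerivAt_dualAngle (hr : 0 < r) (hθ : θ ∈ Ioo 0 π) :
    HasDerivAt (dualAngle r)
      (-(r * sin θ) / (√(1 - 2 * r * cos θ + r ^ 2) *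
        √(1 - (√(1 - 2 * r * cos θ + r ^ 2) - r) ^ 2))) θ := by
  have hq : 0 < 1 - 2 * r * cos θ + r ^ 2 :=
    sqrt_pos.1 ((abs_nonneg _).trans_lt (sqrt_one_sub_two_mul_cos_add_sq_mem_Ioo hr hθ).1)
  have hsub := (sqrt_one_sub_two_mul_cos_add_sq_sub_mem_Ioo hr hθ).2
  have hq' : HasDerivAt (fun θ => 1 - 2 * r * cos θ + r ^ 2) (2 * r * sin θ) θ := by
    simpa using (((hasDerivAt_cos θ).const_mul (2 * r)).const_sub 1).add_const (r ^ 2)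
  refine ((hasDerivAt_arccos hsub.1.ne' hsub.2.ne).comp θ
    ((hq'.sqrt hq.ne').sub_const r)).congr_deriv ?_
  field_simp

theorem abs_deriv_dualAngle_mul (hr : 0 < r) (hθ : θ ∈ Ioo 0 π) :
    |-(r * sin θ) / (√(1 - 2 * r * cos θ + r ^ 2) *
        √(1 - (√(1 - 2 * r * cos θ + r ^ 2) - r) ^ 2))| *
      (2 / √((2 * r + cos (dualAngle r θ)) ^ 2 - 1)) = 1 / √(1 - 2 * r * cos θ + r ^ 2) := by
  have hsin : 0 < sin θ := sin_pos_of_pos_of_lt_pi hθ.1 hθ.2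
  rw [cos_dualAngle hr hθ]
  obtain ⟨ha₁, ha₂⟩ := sqrt_one_sub_two_mul_cos_add_sq_mem_Ioo hr hθ
  have ha_sq : √(1 - 2 * r * cos θ + r ^ 2) ^ 2 = 1 - 2 * r * cos θ + r ^ 2 :=
    sq_sqrt (one_sub_two_mul_cos_add_sq_nonneg r θ)
  set a := √(1 - 2 * r * cos θ + r ^ 2)
  have ha : 0 < a := (abs_nonneg _).trans_lt ha₁
  have har : 1 < a + r := by linarith [le_abs_self (1 - r)]
  have hA : 0 < 1 - (a - r) ^ 2 := by nlinarith [neg_abs_le (1 - r)]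
  have hB : 0 < (2 * r + (a - r)) ^ 2 - 1 := by nlinarith
  have hAB : √(1 - (a - r) ^ 2) * √((2 * r + (a - r)) ^ 2 - 1) = 2 * r * sin θ := by
    rw [← sqrt_mul hA.le, ← sqrt_sq (by positivity : 0 ≤ 2 * r * sin θ)]
    congr 1
    linear_combination
      (2 * r * cos θ - a ^ 2 + 1 + r ^ 2) * ha_sq - 4 * r ^ 2 * sin_sq_add_cos_sq θ
  rw [abs_div, abs_neg, abs_of_pos (by positivity), abs_of_pos (by positivity),
    div_mul_div_comm, mul_assoc a, hAB]
  field_simp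

theorem lintegral_coshDensity_cos (hr : 0 < r) :
    ∫⁻ u in Ioo 0 π, coshDensity (cos u) r =
      ∫⁻ θ in Ioo 0 π, ENNReal.ofReal (1 / √(1 - 2 * r * cos θ + r ^ 2)) := by
  have hS : MeasurableSet {u : ℝ | (1 - cos u) / 2 < r} :=
    measurableSet_lt (by fun_prop) measurable_const
  have hdensity : (fun u => coshDensity (cos u) r) = {u | (1 - cos u) / 2 < r}.indicator
      fun u => ENNReal.ofReal (2 / √((2 * r + cos u) ^ 2 - 1)) := by
    ext u
    simp only [coshDensity, indicator_apply, mem_Ioi, mem_ofPred_eq]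
  rw [hdensity, lintegral_indicator hS, Measure.restrict_restrict hS, ← image_dualAngle hr,
    lintegral_image_eq_lintegral_abs_deriv_mul measurableSet_Ioo
      (fun θ hθ => (hasDerivAt_dualAngle hr hθ).hasDerivWithinAt) (injOn_dualAngle hr)]
  refine setLIntegral_congr_fun measurableSet_Ioo fun θ hθ => ?_
  rw [← ENNReal.ofReal_mul (abs_nonneg _), abs_deriv_dualAngle_mul hr hθ]

end DualAngle

theorem lintegral_Ioc_zero_two_pi_comp_cos (f : ℝ → ℝ≥0∞) :
    ∫⁻ θ in Ioc 0 (2 * π), f (cos θ) = 2 * ∫⁻ θ in Ioo 0 π, f (cos θ) := by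
  have hreflect : ∫⁻ θ in Ioc π (2 * π), f (cos θ) = ∫⁻ θ in Ioo 0 π, f (cos θ) := by
    have himage : (fun θ => 2 * π - θ) '' Ioo 0 π = Ioo π (2 * π) := by
      rw [image_const_sub_Ioo]
      congr 1 <;> ring
    rw [← setLIntegral_congr Ioo_ae_eq_Ioc, ← himage,
      lintegral_image_eq_lintegral_abs_deriv_mul (f := fun θ => 2 * π - θ)
        (f' := fun _ => -1) measurableSet_Ioo
        (fun θ _ => ((hasDerivAt_id' θ).const_sub (2 * π)).hasDerivWithinAt)
        (fun a _ b _ h => by simpa using h)]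
    simp [cos_two_pi_sub]
  rw [← Ioc_union_Ioc_eq_Ioc pi_pos.le (by linarith [pi_pos]),
    lintegral_union measurableSet_Ioc (Ioc_disjoint_Ioc_of_le le_rfl), hreflect,
    setLIntegral_congr Ioo_ae_eq_Ioc, two_mul]

theorem lintegral_exp_cos_mul_lintegral_exp_cosh (x : ℝ) :
    (∫⁻ u in Ioo 0 π, ENNReal.ofReal (exp (2 * x * cos u))) *
        ∫⁻ v in Ioi 0, ENNReal.ofReal (exp (-2 * x * cosh v)) =
      ∫⁻ r in Ioi 0, ENNReal.ofReal (exp (-4 * x * r)) *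
        ∫⁻ θ in Ioo 0 π, ENNReal.ofReal (1 / √(1 - 2 * r * cos θ + r ^ 2)) := by
  calc _ = ∫⁻ u in Ioo 0 π, ∫⁻ v in Ioi 0,
        ENNReal.ofReal (exp (-4 * x * ((cosh v - cos u) / 2))) := by
        rw [← lintegral_mul_const _ (by fun_prop)]
        refine setLIntegral_congr_fun measurableSet_Ioo fun u _ => ?_
        rw [← lintegral_const_mul' _ _ ENNReal.ofReal_ne_top]
        refine setLIntegral_congr_fun measurableSet_Ioi fun v _ => ?_
        rw [← ENNReal.ofReal_mul (exp_pos _).le, ← exp_add]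
        ring_nf
    _ = ∫⁻ u in Ioo 0 π, ∫⁻ r in Ioi 0,
          coshDensity (cos u) r * ENNReal.ofReal (exp (-4 * x * r)) :=
        setLIntegral_congr_fun measurableSet_Ioo fun u _ =>
          lintegral_Ioi_comp_cosh_sub_div_two (cos_le_one u) fun r =>
            ENNReal.ofReal (exp (-4 * x * r))
    _ = ∫⁻ r in Ioi 0, ∫⁻ u in Ioo 0 π,
          coshDensity (cos u) r * ENNReal.ofReal (exp (-4 * x * r)) :=
        lintegral_lintegral_swap (by fun_prop)
    _ = _ := by
        refine setLIntegral_congr_fun measurableSet_Ioi fun r hr => ?_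
        rw [lintegral_mul_const _ (by fun_prop), lintegral_coshDensity_cos hr, mul_comm]

theorem ofReal_average_inv_norm_one_sub_mul_exp {r : ℝ} (hr : 0 ≤ r) (hr₁ : r ≠ 1) :
    ENNReal.ofReal ((1 / (2 * π)) * ∫ θ in (0:ℝ)..(2 * π),
        1 / ‖1 - (r : ℂ) * Complex.exp (θ * Complex.I)‖) =
      ENNReal.ofReal (1 / π) *
        ∫⁻ θ in Ioo 0 π, ENNReal.ofReal (1 / √(1 - 2 * r * cos θ + r ^ 2)) := by
  have hq : ∀ θ, 0 < 1 - 2 * r * cos θ + r ^ 2 := fun θ => by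
    nlinarith [mul_nonneg hr (sub_nonneg.2 (cos_le_one θ)),
      sq_pos_of_ne_zero (sub_ne_zero.2 hr₁)]
  have hcont : Continuous fun θ => 1 / √(1 - 2 * r * cos θ + r ^ 2) :=
    continuous_const.div (by fun_prop) fun θ => (sqrt_pos.2 (hq θ)).ne'
  simp_rw [norm_one_sub_ofReal_mul_exp_mul_I]
  rw [intervalIntegral.integral_of_le (by positivity), ENNReal.ofReal_mul (by positivity),
    ofReal_integral_eq_lintegral_ofReal hcont.integrableOn_Ioc
      (ae_of_all _ fun θ => by positivity),
    lintegral_Ioc_zero_two_pi_comp_cos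
      fun c => ENNReal.ofReal (1 / √(1 - 2 * r * c + r ^ 2)),
    ← mul_assoc, ← ENNReal.ofReal_ofNat 2, ← ENNReal.ofReal_mul (by positivity)]
  congr 2
  field_simp

theorem aestronglyMeasurable_average_inv_norm_one_sub_mul_exp (μ : Measure ℝ) :
    AEStronglyMeasurable (fun r : ℝ => (1 / (2 * π)) * ∫ θ in (0:ℝ)..(2 * π),
      1 / ‖1 - (r : ℂ) * Complex.exp (θ * Complex.I)‖) μ := by
  have hkernel : Measurable fun p : ℝ × ℝ =>
      1 / ‖1 - (p.1 : ℂ) * Complex.exp (p.2 * Complex.I)‖ := by fun_prop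
  simp_rw [intervalIntegral.integral_of_le (by positivity : (0:ℝ) ≤ 2 * π)]
  exact hkernel.stronglyMeasurable.integral_prod_right'.aestronglyMeasurable.const_mul _

theorem integral_Ioi_exp_mul_average_inv_norm_one_sub_mul_exp (x : ℝ) :
    ∫ r in Ioi 0, exp (-4 * x * r) * ((1 / (2 * π)) * ∫ θ in (0:ℝ)..(2 * π),
        1 / ‖1 - (r : ℂ) * Complex.exp (θ * Complex.I)‖) =
      (∫⁻ r in Ioi 0, ENNReal.ofReal (1 / π) * (ENNReal.ofReal (exp (-4 * x * r)) *
        ∫⁻ θ in Ioo 0 π, ENNReal.ofReal (1 / √(1 - 2 * r * cos θ + r ^ 2)))).toReal := by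
  have hnonneg : ∀ r : ℝ, 0 ≤ exp (-4 * x * r) * ((1 / (2 * π)) *
      ∫ θ in (0:ℝ)..(2 * π), 1 / ‖1 - (r : ℂ) * Complex.exp (θ * Complex.I)‖) := fun r =>
    mul_nonneg (exp_pos _).le <| mul_nonneg (by positivity) <|
      intervalIntegral.integral_nonneg (by positivity) fun θ _ => by positivity
  -- at `r = 1` the inner integrand is not integrable and its Bochner integral is the junk `0`
  have hne_one : ∀ᵐ r : ℝ, r ≠ 1 := by
    simpa using (countable_singleton (1:ℝ)).ae_notMem volume
  rw [integral_eq_lintegral_of_nonneg_ae (ae_of_all _ hnonneg)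
    ((Continuous.aestronglyMeasurable (by fun_prop)).mul
      (aestronglyMeasurable_average_inv_norm_one_sub_mul_exp _))]
  congr 1
  refine setLIntegral_congr_fun_ae measurableSet_Ioi ?_
  filter_upwards [hne_one] with r hr₁ hr₀
  rw [ENNReal.ofReal_mul (exp_pos _).le, ofReal_average_inv_norm_one_sub_mul_exp hr₀.le hr₁]
  ring

theorem I0K0_integral_formula_general (x : ℝ) :
    ((1 / π) * ∫ u in (0:ℝ)..π, Real.exp (2 * x * Real.cos u)) *
      (∫ v in Set.Ioi (0:ℝ), Real.exp (-2 * x * Real.cosh v)) =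
    ∫ r in Set.Ioi (0:ℝ), Real.exp (-4 * x * r) *
      ((1 / (2 * π)) * ∫ θ in (0:ℝ)..(2 * π),
        1 / ‖1 - (r : ℂ) * Complex.exp (θ * Complex.I)‖) := by
  rw [integral_Ioi_exp_mul_average_inv_norm_one_sub_mul_exp,
    lintegral_const_mul' _ _ ENNReal.ofReal_ne_top, ← lintegral_exp_cos_mul_lintegral_exp_cosh,
    intervalIntegral.integral_of_le pi_pos.le, integral_Ioc_eq_integral_Ioo,
    integral_eq_lintegral_of_nonneg_ae (ae_of_all _ fun _ => (exp_pos _).le)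
      (Continuous.aestronglyMeasurable (by fun_prop)),
    integral_eq_lintegral_of_nonneg_ae (ae_of_all _ fun _ => (exp_pos _).le)
      (Continuous.aestronglyMeasurable (by fun_prop)),
    ENNReal.toReal_mul, ENNReal.toReal_mul, ENNReal.toReal_ofReal (by positivity), mul_assoc]

theorem I0K0_integral_formula (x : ℝ) (hx : 0 < x) :
    ((1 / π) * ∫ u in (0:ℝ)..π, Real.exp (2 * x * Real.cos u)) *
      (∫ v in Set.Ioi (0:ℝ), Real.exp (-2 * x * Real.cosh v)) =
    ∫ r in Set.Ioi (0:ℝ), Real.exp (-4 * x * r) *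
      ((1 / (2 * π)) * ∫ θ in (0:ℝ)..(2 * π),
        1 / ‖1 - (r : ℂ) * Complex.exp (θ * Complex.I)‖) :=
  I0K0_integral_formula_general x
end

section
/- If x is a positive integer, then the general term u_k = (2k)!^3/(k!^4 (16x)^{2k}) of the asymptotic expansion is minimal at k = 2x; more precisely the ratio u_k/u_{k-1} = (k/(2x))² (1 - 1/(2k))^3 is less than 1 if and only if k ≤ 2x. -/
open Real

lemma nat_ineq (x m : ℕ) (hx : 0 < x) :
    (m+1)^2*(2*m+1)^3 < (2*x)^2*(2*m+2)^3 ↔ m+1 ≤ 2*x := by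
  constructor
  · intro h
    by_contra hc
    push_neg at hc
    have h2 : 2*x ≤ m := by omega
    zify at h h2
    have hmx : (4*(x:ℤ)^2) ≤ (m:ℤ)^2 := by nlinarith
    have hmul : 8*((m:ℤ)+1)^3*(4*(x:ℤ)^2) ≤ 8*((m:ℤ)+1)^3*(m:ℤ)^2 :=
      mul_le_mul_of_nonneg_left hmx (by positivity)
    have key : (0:ℤ) ≤ ((m:ℤ)+1)^2*(4*(m:ℤ)^2+6*(m:ℤ)+1) := by positivity
    nlinarith [hmul, key]
  · intro h
    have a : (m+1)^2 ≤ (2*x)^2 := Nat.pow_le_pow_left h 2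
    have b : (2*m+1)^3 < (2*m+2)^3 := Nat.pow_lt_pow_left (by omega) (by norm_num)
    calc (m+1)^2*(2*m+1)^3 ≤ (2*x)^2*(2*m+1)^3 := Nat.mul_le_mul_right _ a
      _ < (2*x)^2*(2*m+2)^3 := by
        exact (Nat.mul_lt_mul_left (by positivity)).mpr b

theorem minimal_term (x : ℕ) (hx : 0 < x) (k : ℕ) (hk : 1 ≤ k) :
    (((Nat.factorial (2 * k) : ℝ))^3 / ((Nat.factorial k : ℝ)^4 * (16 * x) ^ (2 * k))) /
      (((Nat.factorial (2 * (k - 1)) : ℝ))^3 /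
        ((Nat.factorial (k - 1) : ℝ)^4 * (16 * x) ^ (2 * (k - 1)))) =
      ((k : ℝ) / (2 * x))^2 * (1 - 1 / (2 * k))^3 ∧
    ((((Nat.factorial (2 * k) : ℝ))^3 / ((Nat.factorial k : ℝ)^4 * (16 * x) ^ (2 * k))) /
      (((Nat.factorial (2 * (k - 1)) : ℝ))^3 /
        ((Nat.factorial (k - 1) : ℝ)^4 * (16 * x) ^ (2 * (k - 1)))) < 1 ↔ k ≤ 2 * x) := by
  obtain ⟨m, rfl⟩ : ∃ m, k = m + 1 := ⟨k - 1, by omega⟩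
  simp only [Nat.add_sub_cancel]
  have h2 : 2 * (m + 1) = (2*m+1) + 1 := by ring
  have hf1 : (Nat.factorial (2*m) : ℝ) ≠ 0 := by
    exact_mod_cast (Nat.factorial_pos (2*m)).ne'
  have hf2 : (Nat.factorial m : ℝ) ≠ 0 := by
    exact_mod_cast (Nat.factorial_pos m).ne'
  have hxR : (0:ℝ) < x := by exact_mod_cast hx
  have hX : (16 * (x:ℝ)) ≠ 0 := by positivity
  have hm : ((m:ℝ)+1) ≠ 0 := by positivity
  have heq : (((Nat.factorial (2 * (m+1)) : ℝ))^3 /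
      ((Nat.factorial (m+1) : ℝ)^4 * (16 * x) ^ (2 * (m+1)))) /
      (((Nat.factorial (2 * m) : ℝ))^3 /
        ((Nat.factorial m : ℝ)^4 * (16 * x) ^ (2 * m))) =
      (((m:ℝ)+1) / (2 * x))^2 * (1 - 1 / (2 * ((m:ℝ)+1)))^3 := by
    rw [h2, Nat.factorial_succ, Nat.factorial_succ, Nat.factorial_succ]
    push_cast
    field_simp
    ring
  constructor
  · rw [heq]; push_cast; ring
  · rw [heq]
    have key : (((m+1)^2*(2*m+1)^3 : ℕ) : ℝ) < (((2*x)^2*(2*m+2)^3 : ℕ) : ℝ) ↔ m+1 ≤ 2*x := by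
      rw [Nat.cast_lt]
      exact nat_ineq x m hx
    push_cast at key
    rw [show (((m:ℝ)+1) / (2 * x))^2 * (1 - 1 / (2 * ((m:ℝ)+1)))^3 =
        (((m:ℝ)+1)^2*(2*(m:ℝ)+1)^3) / ((2*(x:ℝ))^2*(2*(m:ℝ)+2)^3) by field_simp; ring]
    rw [div_lt_one (by positivity)]
    exact key
end

section
/- For every integer k ≥ 1, the coefficient c_k = w_k (log 2 - Σ_{ℓ=1}^{2k} (-1)^{ℓ-1}/ℓ) satisfies 0 < c_k < 1/(π² k²). -/
/-!
Wallis's product gives `w_k = 1 / ((2k + 1) W_k)` with `W_k ≥ (2k + 1) / (2k + 2) · π / 2`,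
hence `w_k < 1 / (π k)`. The remainder of the alternating series for `log 2` after `2k` terms is
`∫₀¹ x^{2k} / (1 + x) dx`, which is positive and, since `x ≤ (1 + x) / 2` on `[0, 1]`, at most
`∫₀¹ x^{2k-1} / 2 dx = 1 / (4k)`. As `π < 4`, the product is below `1 / (4π k²) < 1 / (π² k²)`.
-/

open Real Finset intervalIntegral

namespace Real.Wallis

lemma factorial_sq_div_eq_one_div_mul_W (k : ℕ) :
    ((Nat.factorial (2 * k) : ℝ)) ^ 2 / (2 ^ (4 * k) * (Nat.factorial k : ℝ) ^ 4)
      = 1 / ((2 * k + 1) * W k) := by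
  rw [W_eq_factorial_ratio]
  field_simp

lemma pi_mul_lt_mul_W (k : ℕ) : π * k < (2 * k + 1) * W k := by
  have hk : (0 : ℝ) ≤ k := k.cast_nonneg
  calc π * k < (2 * k + 1) * ((2 * k + 1) / (2 * k + 2) * (π / 2)) := by
        rw [← sub_pos]
        field_simp
        nlinarith [pi_pos]
    _ ≤ (2 * k + 1) * W k := by gcongr; exact le_W k

lemma factorial_sq_div_lt {k : ℕ} (hk : 0 < k) :
    ((Nat.factorial (2 * k) : ℝ)) ^ 2 / (2 ^ (4 * k) * (Nat.factorial k : ℝ) ^ 4)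
      < 1 / (π * k) := by
  rw [factorial_sq_div_eq_one_div_mul_W]
  exact one_div_lt_one_div_of_lt (by positivity) (pi_mul_lt_mul_W k)

end Real.Wallis

lemma intervalIntegrable_pow_div_one_add (n : ℕ) :
    IntervalIntegrable (fun x : ℝ => x ^ n / (1 + x)) MeasureTheory.volume 0 1 := by
  refine ContinuousOn.intervalIntegrable (ContinuousOn.div (by fun_prop) (by fun_prop) ?_)
  intro x hx
  rw [Set.uIcc_of_le zero_le_one] at hx
  linarith [hx.1]

lemma log_two_sub_sum_range_eq_integral (n : ℕ) :
    log 2 - ∑ l ∈ range n, (-1 : ℝ) ^ l / (l + 1)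
      = (-1) ^ n * ∫ x in (0 : ℝ)..1, x ^ n / (1 + x) := by
  have hlog : ∫ x in (0 : ℝ)..1, (1 + x)⁻¹ = log 2 := by
    rw [integral_comp_add_left (fun x => x⁻¹) 1]
    norm_num
  have hsum : ∫ x in (0 : ℝ)..1, ∑ l ∈ range n, (-1) ^ l * x ^ l
      = ∑ l ∈ range n, (-1 : ℝ) ^ l / (l + 1) := by
    rw [integral_finsetSum fun l _ => by apply Continuous.intervalIntegrable; fun_prop]
    refine sum_congr rfl fun l _ => ?_
    simp [integral_const_mul, integral_pow, div_eq_mul_inv]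
  have hgeom : ∀ x ∈ Set.uIcc (0 : ℝ) 1,
      (1 + x)⁻¹ = ∑ l ∈ range n, (-1) ^ l * x ^ l + (-1) ^ n * (x ^ n / (1 + x)) := by
    intro x hx
    rw [Set.uIcc_of_le zero_le_one] at hx
    have h := mul_neg_geom_sum (-x) n
    simp only [neg_pow x] at h
    have : 1 + x ≠ 0 := by linarith [hx.1]
    field_simp
    linarith
  rw [← hlog, integral_congr hgeom, integral_add, hsum, integral_const_mul]
  · ring
  · apply Continuous.intervalIntegrable; fun_prop
  · exact (intervalIntegrable_pow_div_one_add n).const_mul _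

lemma integral_pow_div_one_add_pos (n : ℕ) : 0 < ∫ x in (0 : ℝ)..1, x ^ n / (1 + x) :=
  intervalIntegral_pos_of_pos_on (intervalIntegrable_pow_div_one_add n)
    (fun x hx => by have := hx.1; positivity) zero_lt_one

lemma integral_pow_div_one_add_le {n : ℕ} (hn : n ≠ 0) :
    ∫ x in (0 : ℝ)..1, x ^ n / (1 + x) ≤ 1 / (2 * n) := by
  obtain ⟨m, rfl⟩ := Nat.exists_eq_succ_of_ne_zero hn
  have hint : ∫ x in (0 : ℝ)..1, x ^ m / 2 = 1 / (2 * (m + 1 : ℕ)) := by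
    simp [integral_div, integral_pow]
    ring
  rw [← hint]
  refine integral_mono_on zero_le_one (intervalIntegrable_pow_div_one_add _)
    (by apply Continuous.intervalIntegrable; fun_prop) fun x hx => ?_
  have hx0 := hx.1
  rw [div_le_div_iff₀ (by linarith) two_pos, pow_succ]
  nlinarith [pow_nonneg hx0 m, hx.2]

theorem ck_bounds (k : ℕ) (hk : 1 ≤ k) :
    0 < ((Nat.factorial (2 * k) : ℝ))^2 / (2 ^ (4 * k) * (Nat.factorial k : ℝ)^4) *
        (Real.log 2 - ∑ l ∈ Finset.range (2 * k), (-1 : ℝ) ^ l / (l + 1)) ∧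
    ((Nat.factorial (2 * k) : ℝ))^2 / (2 ^ (4 * k) * (Nat.factorial k : ℝ)^4) *
        (Real.log 2 - ∑ l ∈ Finset.range (2 * k), (-1 : ℝ) ^ l / (l + 1)) <
      1 / (π ^ 2 * k ^ 2) := by
  set w : ℝ := ((Nat.factorial (2 * k) : ℝ))^2 / (2 ^ (4 * k) * (Nat.factorial k : ℝ)^4)
  set T : ℝ := Real.log 2 - ∑ l ∈ Finset.range (2 * k), (-1 : ℝ) ^ l / (l + 1)
  have hT : T = ∫ x in (0 : ℝ)..1, x ^ (2 * k) / (1 + x) := by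
    simp [T, log_two_sub_sum_range_eq_integral, pow_mul]
  have hT_pos : 0 < T := hT ▸ integral_pow_div_one_add_pos _
  have hT_le : T ≤ 1 / (4 * k) := by
    rw [hT]
    convert integral_pow_div_one_add_le (n := 2 * k) (by omega) using 2
    push_cast
    ring
  refine ⟨mul_pos (by positivity) hT_pos, ?_⟩
  have hk₀ : (0 : ℝ) < k := by exact_mod_cast hk
  calc w * T < 1 / (π * k) * (1 / (4 * k)) :=
        mul_lt_mul (Wallis.factorial_sq_div_lt hk) hT_le hT_pos (by positivity)
    _ < 1 / (π ^ 2 * k ^ 2) := by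
        rw [div_mul_div_comm, one_mul]
        refine one_div_lt_one_div_of_lt (by positivity) ?_
        nlinarith [pi_lt_four, mul_pos pi_pos (mul_pos hk₀ hk₀)]
end

section
/- For every integer k ≥ 1, w_k = (1/(πk)) (1 - 1/(2(2k-1)) + ε_k) with 1/(12k(2k-1)) < ε_k < 5/(16k(2k-1)), where w_k = ((2k)!)^2/(2^{4k}(k!)^4). -/
/-!
Put `e k = π k w_k`. Since `w_k = 1 / ((2k + 1) W_k)` with `W_k` the Wallis product, `e k → 1`,
and `e (k + 1) = r k * e k` with `r x = (2x + 1)² / (4x(x + 1))`. For a comparison function `B`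
with `B (x + 1) < r x * B x` the quotient `e / B` is strictly increasing, so if also `B k → 1`
then `e k < B k`; the reverse inequality `r x * B x < B (x + 1)` gives `B k < e k`. Both bounds
come from `B = 1 - 1 / (2(2x - 1)) + c / (x(2x - 1))`, for which `r x * B x - B (x + 1)` is a
rational function with numerator `(32c - 10) x² + (12c - 3) x + 2c`: positive for `c = 5/16`,
negative for `c = 1/12` once `x ≥ 1`.
-/

open Real Filter Topology

theorem lt_of_tendsto_of_mul_succ_lt {u f : ℕ → ℝ} {L : ℝ} (hL : L ≠ 0)
    (hu : Tendsto u atTop (𝓝 L)) (hf : Tendsto f atTop (𝓝 L)) (hf_pos : ∀ n, 0 < f n)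
    (hstep : ∀ n, u n * f (n + 1) < u (n + 1) * f n) (n : ℕ) : u n < f n := by
  have hmono : StrictMono fun n => u n / f n := strictMono_nat_of_lt_succ fun n => by
    rw [div_lt_div_iff₀ (hf_pos n) (hf_pos (n + 1))]
    exact hstep n
  have hlim : Tendsto (fun n => u n / f n) atTop (𝓝 1) := by
    have := hu.div hf hL
    rwa [div_self hL] at this
  have hlt : u n / f n < 1 :=
    (hmono (Nat.lt_succ_self n)).trans_le (hmono.monotone.ge_of_tendsto hlim (n + 1))
  exact (div_lt_one (hf_pos n)).1 hlt

namespace WkExpansion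

noncomputable def w (k : ℕ) : ℝ :=
  ((Nat.factorial (2 * k) : ℝ))^2 / (2 ^ (4 * k) * (Nat.factorial k : ℝ)^4)

noncomputable def e (k : ℕ) : ℝ := π * k * w k

noncomputable def ratio (x : ℝ) : ℝ := (2 * x + 1) ^ 2 / (4 * x * (x + 1))

noncomputable def expansion (c x : ℝ) : ℝ := 1 - 1 / (2 * (2 * x - 1)) + c / (x * (2 * x - 1))

theorem w_eq_inv (k : ℕ) : w k = ((2 * k + 1) * Real.Wallis.W k)⁻¹ := by
  rw [Real.Wallis.W_eq_factorial_ratio, w]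
  field_simp

theorem e_eq (k : ℕ) : e k = π / 2 * (k / (k + 1 / 2)) / Real.Wallis.W k := by
  rw [e, w_eq_inv]
  field_simp

theorem e_pos {k : ℕ} (hk : k ≠ 0) : 0 < e k := by
  have := Real.Wallis.W_pos k
  rw [e_eq]
  positivity

theorem tendsto_e : Tendsto e atTop (𝓝 1) := by
  have hpi : π / 2 ≠ 0 := by positivity
  have := ((tendsto_natCast_div_add_atTop (1 / 2 : ℝ)).const_mul (π / 2)).div
    Real.Wallis.tendsto_W_nhds_pi_div_two hpi
  rw [mul_one, div_self hpi] at this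
  exact this.congr fun k => (e_eq k).symm

theorem e_succ {k : ℕ} (hk : k ≠ 0) : e (k + 1) = ratio k * e k := by
  rw [e, e, w_eq_inv, w_eq_inv, Real.Wallis.W_succ, ratio]
  push_cast
  field_simp
  ring

theorem ratio_mul_expansion_sub {c x : ℝ} (hx : 1 ≤ x) :
    ratio x * expansion c x - expansion c (x + 1) =
      ((32 * c - 10) * x ^ 2 + (12 * c - 3) * x + 2 * c) /
        (8 * x ^ 2 * (x + 1) * (2 * x - 1) * (2 * x + 1)) := by
  have h1 : 2 * x - 1 ≠ 0 := by linarith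
  have h2 : 2 * (x + 1) - 1 ≠ 0 := by linarith
  rw [ratio, expansion, expansion]
  field_simp
  ring

theorem expansion_succ_lt {x : ℝ} (hx : 1 ≤ x) :
    expansion (5 / 16) (x + 1) < ratio x * expansion (5 / 16) x := by
  rw [← sub_pos, ratio_mul_expansion_sub hx]
  have : 0 < 2 * x - 1 := by linarith
  exact div_pos (by nlinarith) (by positivity)

theorem lt_expansion_succ {x : ℝ} (hx : 1 ≤ x) :
    ratio x * expansion (1 / 12) x < expansion (1 / 12) (x + 1) := by
  rw [← sub_neg, ratio_mul_expansion_sub hx]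
  have : 0 < 2 * x - 1 := by linarith
  exact div_neg_of_neg_of_pos (by nlinarith) (by positivity)

theorem expansion_pos {c x : ℝ} (hc : 0 ≤ c) (hx : 1 ≤ x) : 0 < expansion c x := by
  have h1 : 1 / (2 * (2 * x - 1)) ≤ 1 / 2 := by
    gcongr
    linarith
  have h2 : 0 ≤ c / (x * (2 * x - 1)) := by
    have : 0 ≤ 2 * x - 1 := by linarith
    positivity
  rw [expansion]
  linarith

theorem tendsto_expansion (c : ℝ) : Tendsto (expansion c) atTop (𝓝 1) := by
  have hlin : Tendsto (fun x : ℝ => 2 * x - 1) atTop atTop :=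
    tendsto_atTop_add_const_right _ _ (tendsto_id.const_mul_atTop two_pos)
  have h1 : Tendsto (fun x : ℝ => 1 / (2 * (2 * x - 1))) atTop (𝓝 0) :=
    tendsto_const_nhds.div_atTop (hlin.const_mul_atTop two_pos)
  have h2 : Tendsto (fun x : ℝ => c / (x * (2 * x - 1))) atTop (𝓝 0) :=
    tendsto_const_nhds.div_atTop (tendsto_id.atTop_mul_atTop₀ hlin)
  have := ((tendsto_const_nhds (x := (1 : ℝ))).sub h1).add h2
  rwa [sub_zero, add_zero] at this

theorem e_lt_expansion {k : ℕ} (hk : 1 ≤ k) : e k < expansion (5 / 16) k := by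
  obtain ⟨m, rfl⟩ := Nat.exists_eq_add_of_le' hk
  refine lt_of_tendsto_of_mul_succ_lt one_ne_zero (u := fun n => e (n + 1))
    (f := fun n => expansion (5 / 16) ((n + 1 : ℕ) : ℝ))
    (tendsto_e.comp (tendsto_add_atTop_nat 1))
    ((tendsto_expansion _).comp (tendsto_natCast_atTop_atTop.comp (tendsto_add_atTop_nat 1)))
    (fun n => expansion_pos (by norm_num) (by simp)) (fun n => ?_) m
  have hx : (1 : ℝ) ≤ ((n + 1 : ℕ) : ℝ) := by simp
  simp only [e_succ n.succ_ne_zero, Nat.cast_succ (n + 1)]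
  linarith [mul_lt_mul_of_pos_left (expansion_succ_lt hx) (e_pos n.succ_ne_zero)]

theorem expansion_lt_e {k : ℕ} (hk : 1 ≤ k) : expansion (1 / 12) k < e k := by
  obtain ⟨m, rfl⟩ := Nat.exists_eq_add_of_le' hk
  refine lt_of_tendsto_of_mul_succ_lt one_ne_zero
    (u := fun n => expansion (1 / 12) ((n + 1 : ℕ) : ℝ)) (f := fun n => e (n + 1))
    ((tendsto_expansion _).comp (tendsto_natCast_atTop_atTop.comp (tendsto_add_atTop_nat 1)))
    (tendsto_e.comp (tendsto_add_atTop_nat 1))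
    (fun n => e_pos n.succ_ne_zero) (fun n => ?_) m
  have hx : (1 : ℝ) ≤ ((n + 1 : ℕ) : ℝ) := by simp
  simp only [e_succ n.succ_ne_zero, Nat.cast_succ (n + 1)]
  linarith [mul_lt_mul_of_pos_left (lt_expansion_succ hx) (e_pos n.succ_ne_zero)]

end WkExpansion

open WkExpansion in
theorem wk_refined_expansion (k : ℕ) (hk : 1 ≤ k) :
    let w := ((Nat.factorial (2 * k) : ℝ))^2 / (2 ^ (4 * k) * (Nat.factorial k : ℝ)^4)
    let ε := π * k * w - 1 + 1 / (2 * (2 * k - 1))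
    w = 1 / (π * k) * (1 - 1 / (2 * (2 * k - 1)) + ε) ∧
    1 / (12 * k * (2 * k - 1)) < ε ∧ ε < 5 / (16 * k * (2 * k - 1)) := by
  intro w ε
  have hk0 : (k : ℝ) ≠ 0 := by positivity
  have hlower : expansion (1 / 12) k < π * k * w := expansion_lt_e hk
  have hupper : π * k * w < expansion (5 / 16) k := e_lt_expansion hk
  rw [expansion, div_div, ← mul_assoc] at hlower hupper
  refine ⟨?_, ?_, ?_⟩
  · simp only [ε]
    field_simp
    ring
  · linarith
  · linarith
end

section
/- For integers 1 ≤ ℓ ≤ 2x - 1 and real x ≥ 1, exp(1/(32x) - (ℓ+1/2)²/(8x)) < (4x)^ℓ / ((4x+1)(4x+2)⋯(4x+ℓ)) < exp(1/(32x) - (ℓ+1/2)²/(8x) + (ℓ+1/2)³/(96x²)). -/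
open Real Finset

/-!
Write `(4x)^ℓ / ∏ (4x + j) = exp (-S)` with `S = ∑_{j=1}^ℓ log (1 + j/(4x))`. For `t > 0`,
`t - t²/2 < 2t/(t+2) < log (1 + t) < t`; summing with `∑ j = ℓ(ℓ+1)/2` and
`∑ j² = ℓ(ℓ+1)(2ℓ+1)/6` gives
`ℓ(ℓ+1)/(8x) - ℓ(ℓ+1)(2ℓ+1)/(192x²) < S < ℓ(ℓ+1)/(8x)`.
These are the claimed exponents because `ℓ(ℓ+1) = (ℓ+1/2)² - 1/4` and
`ℓ(ℓ+1)(2ℓ+1) < 2(ℓ+1/2)³`.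
-/

theorem sum_range_add_one_eq (n : ℕ) :
    ∑ j ∈ range n, ((j : ℝ) + 1) = (n : ℝ) * (n + 1) / 2 := by
  induction n with
  | zero => simp
  | succ n ih => rw [sum_range_succ, ih]; push_cast; ring

theorem sum_range_add_one_sq_eq (n : ℕ) :
    ∑ j ∈ range n, ((j : ℝ) + 1) ^ 2 = (n : ℝ) * (n + 1) * (2 * n + 1) / 6 := by
  induction n with
  | zero => simp
  | succ n ih => rw [sum_range_succ, ih]; push_cast; ring

theorem sub_sq_div_two_lt_log_one_add {t : ℝ} (ht : 0 < t) : t - t ^ 2 / 2 < log (1 + t) := by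
  refine lt_of_le_of_lt ?_ (lt_log_one_add_of_pos ht)
  rw [le_div_iff₀ (by linarith)]
  nlinarith [pow_pos ht 3]

theorem log_one_add_lt_self {t : ℝ} (ht : 0 < t) : log (1 + t) < t := by
  linarith [log_lt_sub_one_of_pos (x := 1 + t) (by linarith) (by linarith)]

section LogSum

variable {a : ℝ} (ha : 0 < a)
include ha

theorem pow_div_prod_add_eq_exp_neg_sum_log (l : ℕ) :
    a ^ l / ∏ j ∈ range l, (a + (j + 1)) =
      exp (-∑ j ∈ range l, log (1 + ((j : ℝ) + 1) / a)) := by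
  have hterm : ∀ j ∈ range l, exp (log (1 + ((j : ℝ) + 1) / a)) = (a + (j + 1)) / a :=
    fun j _ => by rw [exp_log (by positivity)]; field_simp
  rw [exp_neg, exp_sum, prod_congr rfl hterm, prod_div_distrib, prod_const, card_range, inv_div]

theorem sum_log_one_add_div_lt {l : ℕ} (hl : l ≠ 0) :
    ∑ j ∈ range l, log (1 + ((j : ℝ) + 1) / a) < l * (l + 1) / (2 * a) := by
  calc ∑ j ∈ range l, log (1 + ((j : ℝ) + 1) / a)
      < ∑ j ∈ range l, ((j : ℝ) + 1) / a :=
        sum_lt_sum_of_nonempty (nonempty_range_iff.mpr hl)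
          fun j _ => log_one_add_lt_self (by positivity)
    _ = l * (l + 1) / (2 * a) := by rw [← sum_div, sum_range_add_one_eq]; field_simp

theorem lt_sum_log_one_add_div {l : ℕ} (hl : l ≠ 0) :
    l * (l + 1) / (2 * a) - l * (l + 1) * (2 * l + 1) / (12 * a ^ 2) <
      ∑ j ∈ range l, log (1 + ((j : ℝ) + 1) / a) := by
  calc (l : ℝ) * (l + 1) / (2 * a) - l * (l + 1) * (2 * l + 1) / (12 * a ^ 2)
      = ∑ j ∈ range l, (((j : ℝ) + 1) / a - (((j : ℝ) + 1) / a) ^ 2 / 2) := by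
        simp only [div_pow, sum_sub_distrib, ← sum_div, sum_range_add_one_eq,
          sum_range_add_one_sq_eq]
        field_simp
        ring
    _ < ∑ j ∈ range l, log (1 + ((j : ℝ) + 1) / a) :=
        sum_lt_sum_of_nonempty (nonempty_range_iff.mpr hl)
          fun j _ => sub_sq_div_two_lt_log_one_add (by positivity)

end LogSum

theorem product_exponential_bounds_general (x : ℝ) (hx : 1 ≤ x) (l : ℕ) (hl1 : 1 ≤ l) :
    Real.exp (1 / (32 * x) - ((l : ℝ) + 1/2) ^ 2 / (8 * x)) <
      (4 * x) ^ l / (∏ j ∈ Finset.range l, (4 * x + (j + 1))) ∧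
    (4 * x) ^ l / (∏ j ∈ Finset.range l, (4 * x + (j + 1))) <
      Real.exp (1 / (32 * x) - ((l : ℝ) + 1/2) ^ 2 / (8 * x) +
        ((l : ℝ) + 1/2) ^ 3 / (96 * x ^ 2)) := by
  have h4x : 0 < 4 * x := by linarith
  have hl : l ≠ 0 := by omega
  have hcenter :
      1 / (32 * x) - ((l : ℝ) + 1/2) ^ 2 / (8 * x) = -(l * (l + 1) / (2 * (4 * x))) := by
    field_simp; ring
  have hcubic : (l : ℝ) * (l + 1) * (2 * l + 1) / (12 * (4 * x) ^ 2) <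
      ((l : ℝ) + 1/2) ^ 3 / (96 * x ^ 2) := by
    rw [div_lt_div_iff₀ (by positivity) (by positivity)]
    nlinarith [sq_pos_of_pos h4x]
  rw [pow_div_prod_add_eq_exp_neg_sum_log h4x, hcenter, exp_lt_exp, exp_lt_exp]
  have hupper := sum_log_one_add_div_lt h4x hl
  have hlower := lt_sum_log_one_add_div h4x hl
  constructor <;> linarith

theorem product_exponential_bounds (x : ℝ) (hx : 1 ≤ x) (l : ℕ) (hl1 : 1 ≤ l)
    (hl2 : (l : ℝ) ≤ 2 * x - 1) :
    Real.exp (1 / (32 * x) - ((l : ℝ) + 1/2) ^ 2 / (8 * x)) <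
      (4 * x) ^ l / (∏ j ∈ Finset.range l, (4 * x + (j + 1))) ∧
    (4 * x) ^ l / (∏ j ∈ Finset.range l, (4 * x + (j + 1))) <
      Real.exp (1 / (32 * x) - ((l : ℝ) + 1/2) ^ 2 / (8 * x) +
        ((l : ℝ) + 1/2) ^ 3 / (96 * x ^ 2)) :=
  product_exponential_bounds_general x hx l hl1
end
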